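/- arXiv:2407.13237 — 5 statements merged into one kernel-verified Lean document; each statement's English description precedes it below -/
import Mathlib

section
/- If ℓ : Y × Y → ℝ is a loss satisfying ℓ(y₁,y₂) ≤ C‖y₁-y₂‖ᵠ for some q ≥ 1 and C ≥ 0, and u agrees with u* on a finite set X₀ ⊆ X, then for any probability measure ρ on X, the expected loss ∫ ℓ(u*(x), u(x)) dρ(x) ≤ C · (Lip(u*) + Lip(u))ᵠ · ∫ dist(x, X₀)ᵠ dρ(x). -/
open MeasureTheory Metric

lemma LipschitzWith.norm_le_mul_infDist {X E : Type*} [PseudoMetricSpace X]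
    [SeminormedAddGroup E] {K : NNReal} {h : X → E} {s : Set X} (hh : LipschitzWith K h)
    (hs : s.Nonempty) (h_zero : ∀ y ∈ s, h y = 0) (x : X) :
    ‖h x‖ ≤ K * infDist x s := by
  have : Nonempty s := hs.to_subtype
  rw [infDist_eq_iInf, Real.mul_iInf_of_nonneg K.coe_nonneg]
  refine le_ciInf fun y => ?_
  simpa [h_zero y y.2, dist_eq_norm] using hh.dist_le_mul x y

lemma LipschitzWith.norm_sub_le_mul_infDist {X E : Type*} [PseudoMetricSpace X]
    [SeminormedAddCommGroup E] {K₁ K₂ : NNReal} {f g : X → E} {s : Set X}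
    (hf : LipschitzWith K₁ f) (hg : LipschitzWith K₂ g) (hs : s.Nonempty)
    (h_eq : ∀ y ∈ s, g y = f y) (x : X) :
    ‖f x - g x‖ ≤ (K₁ + K₂) * infDist x s := by
  simpa using (hf.sub hg).norm_le_mul_infDist hs (fun y hy => by simp [h_eq y hy]) x

theorem stmt1_general {X Y : Type*} [MetricSpace X] [MeasurableSpace X]
    [NormedAddCommGroup Y]
    (ρ : Measure X)
    (X₀ : Set X) (hne : X₀.Nonempty)
    (us u : X → Y) (Ks K : NNReal)
    (hus : LipschitzWith Ks us) (hu : LipschitzWith K u)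
    (hagree : ∀ x ∈ X₀, u x = us x)
    (ℓ : Y × Y → ℝ) (q C : ℝ) (hq : 1 ≤ q) (hC : 0 ≤ C)
    (hℓ : ∀ y₁ y₂ : Y, ℓ (y₁, y₂) ≤ C * ‖y₁ - y₂‖ ^ q)
    (hint₁ : Integrable (fun x => ℓ (us x, u x)) ρ)
    (hint₂ : Integrable (fun x => (Metric.infDist x X₀) ^ q) ρ) :
    ∫ x, ℓ (us x, u x) ∂ρ
      ≤ C * ((Ks : ℝ) + (K : ℝ)) ^ q * ∫ x, (Metric.infDist x X₀) ^ q ∂ρ := by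
  have h_pointwise (x : X) :
      ℓ (us x, u x) ≤ C * ((Ks : ℝ) + K) ^ q * infDist x X₀ ^ q :=
    calc ℓ (us x, u x) ≤ C * ‖us x - u x‖ ^ q := hℓ _ _
      _ ≤ C * (((Ks : ℝ) + K) * infDist x X₀) ^ q := by
        gcongr
        exact hus.norm_sub_le_mul_infDist hu hne hagree x
      _ = C * ((Ks : ℝ) + K) ^ q * infDist x X₀ ^ q := by
        rw [Real.mul_rpow (by positivity) infDist_nonneg, mul_assoc]
  calc ∫ x, ℓ (us x, u x) ∂ρ
      ≤ ∫ x, C * ((Ks : ℝ) + K) ^ q * infDist x X₀ ^ q ∂ρ :=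
        integral_mono hint₁ (hint₂.const_mul _) h_pointwise
    _ = C * ((Ks : ℝ) + K) ^ q * ∫ x, infDist x X₀ ^ q ∂ρ := integral_const_mul _ _

/-- If `ℓ(y₁,y₂) ≤ C‖y₁-y₂‖^q` for some `q ≥ 1`, `C ≥ 0`, and `u` agrees
with `u*` on a finite nonempty set `X₀`, then for a probability measure `ρ`,
`∫ ℓ(u* x, u x) dρ ≤ C * (Lip u* + Lip u)^q * ∫ (dist x X₀)^q dρ`. -/
theorem stmt1 {X Y : Type*} [MetricSpace X] [MeasurableSpace X] [BorelSpace X]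
    [NormedAddCommGroup Y]
    (ρ : Measure X) [IsProbabilityMeasure ρ]
    (X₀ : Set X) (hfin : X₀.Finite) (hne : X₀.Nonempty)
    (us u : X → Y) (Ks K : NNReal)
    (hus : LipschitzWith Ks us) (hu : LipschitzWith K u)
    (hagree : ∀ x ∈ X₀, u x = us x)
    (ℓ : Y × Y → ℝ) (q C : ℝ) (hq : 1 ≤ q) (hC : 0 ≤ C)
    (hℓ : ∀ y₁ y₂ : Y, ℓ (y₁, y₂) ≤ C * ‖y₁ - y₂‖ ^ q)
    (hint₁ : Integrable (fun x => ℓ (us x, u x)) ρ)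
    (hint₂ : Integrable (fun x => (Metric.infDist x X₀) ^ q) ρ) :
    ∫ x, ℓ (us x, u x) ∂ρ
      ≤ C * ((Ks : ℝ) + (K : ℝ)) ^ q * ∫ x, (Metric.infDist x X₀) ^ q ∂ρ :=
  stmt1_general ρ X₀ hne us u Ks K hus hu hagree ℓ q C hq hC hℓ hint₁ hint₂
end

section
/- If g : S → S is K₂-Lipschitz with γK₂ < 1 and r : S → ℝ is K₁-Lipschitz and bounded, then the infinite-horizon value function V(s) = Σ_{t=0}^{∞} γᵗ r(gᵗ(s)) is well-defined and is (K₁/(1 - γK₂))-Lipschitz. -/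
/-!
The series is dominated by `M γ^t` for a bound `M` of `|r|`. Since `g^[t]` is `K₂^t`-Lipschitz,
the `t`-th terms at `s₁` and `s₂` differ by at most `K₁ (γ K₂)^t d(s₁, s₂)`, and summing this
geometric series gives the constant `K₁ / (1 - γ K₂)`.
-/

lemma summable_pow_mul_of_abs_le {γ M : ℝ} {f : ℕ → ℝ} (hγ : 0 ≤ γ) (hγ1 : γ < 1)
    (hf : ∀ t, |f t| ≤ M) : Summable fun t => γ ^ t * f t :=
  ((summable_geometric_of_lt_one hγ hγ1).mul_left M).of_norm_bounded fun t => by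
    rw [Real.norm_eq_abs, abs_mul, abs_of_nonneg (pow_nonneg hγ t), mul_comm M]
    exact mul_le_mul_of_nonneg_left (hf t) (pow_nonneg hγ t)

lemma abs_tsum_sub_tsum_le {ι : Type*} {f h c : ι → ℝ} (hf : Summable f) (hh : Summable h)
    (hc : Summable c) (hle : ∀ i, |f i - h i| ≤ c i) :
    |∑' i, f i - ∑' i, h i| ≤ ∑' i, c i := by
  rw [← hf.tsum_sub hh]
  exact tsum_of_norm_bounded (f := fun i => f i - h i) hc.hasSum hle

lemma dist_iterate_le_pow_mul {S : Type*} [PseudoMetricSpace S] {g : S → S} {K : ℝ}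
    (hK : 0 ≤ K) (hg : ∀ s s', dist (g s) (g s') ≤ K * dist s s') (t : ℕ) (s s' : S) :
    dist (g^[t] s) (g^[t] s') ≤ K ^ t * dist s s' := by
  have hgK : LipschitzWith K.toNNReal g :=
    .of_dist_le_mul fun s s' => by rw [Real.coe_toNNReal K hK]; exact hg s s'
  simpa [Real.coe_toNNReal K hK] using (hgK.iterate t).dist_le_mul s s'

/-- If `g` is `K₂`-Lipschitz with `γ K₂ < 1` and `r` is `K₁`-Lipschitz and
bounded, then the infinite-horizon value `V s = ∑_{t=0}^∞ γ^t r (g^[t] s)` is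
well-defined (the series is summable) and `V` is `K₁/(1 - γ K₂)`-Lipschitz. -/
theorem stmt5 {S : Type*} [MetricSpace S]
    (r : S → ℝ) (g : S → S) (K₁ K₂ γ : ℝ) (hK₁ : 0 ≤ K₁) (hK₂ : 0 ≤ K₂)
    (hγ : 0 ≤ γ) (hγ1 : γ < 1) (hγK : γ * K₂ < 1)
    (hrb : ∃ M : ℝ, ∀ s, |r s| ≤ M)
    (hr : ∀ s s' : S, |r s - r s'| ≤ K₁ * dist s s')
    (hg : ∀ s s' : S, dist (g s) (g s') ≤ K₂ * dist s s')
    (V : S → ℝ) (hV : ∀ s, V s = ∑' t : ℕ, γ ^ t * r (g^[t] s)) :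
    (∀ s : S, Summable fun t : ℕ => γ ^ t * r (g^[t] s))
    ∧ (∀ s₁ s₂ : S, |V s₁ - V s₂| ≤ K₁ / (1 - γ * K₂) * dist s₁ s₂) := by
  obtain ⟨M, hM⟩ := hrb
  have hsum : ∀ s, Summable fun t : ℕ => γ ^ t * r (g^[t] s) := fun s =>
    summable_pow_mul_of_abs_le hγ hγ1 fun t => hM _
  refine ⟨hsum, fun s₁ s₂ => ?_⟩
  have hγK₂ : 0 ≤ γ * K₂ := mul_nonneg hγ hK₂
  have hterm : ∀ t : ℕ, |γ ^ t * r (g^[t] s₁) - γ ^ t * r (g^[t] s₂)|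
      ≤ K₁ * dist s₁ s₂ * (γ * K₂) ^ t := fun t =>
    calc |γ ^ t * r (g^[t] s₁) - γ ^ t * r (g^[t] s₂)|
        = γ ^ t * |r (g^[t] s₁) - r (g^[t] s₂)| := by
          rw [← mul_sub, abs_mul, abs_of_nonneg (pow_nonneg hγ t)]
      _ ≤ γ ^ t * (K₁ * (K₂ ^ t * dist s₁ s₂)) := by
          gcongr
          exact (hr _ _).trans (by gcongr; exact dist_iterate_le_pow_mul hK₂ hg t s₁ s₂)
      _ = K₁ * dist s₁ s₂ * (γ * K₂) ^ t := by ring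
  calc |V s₁ - V s₂| ≤ ∑' t : ℕ, K₁ * dist s₁ s₂ * (γ * K₂) ^ t := by
        rw [hV, hV]
        exact abs_tsum_sub_tsum_le (hsum s₁) (hsum s₂)
          ((summable_geometric_of_lt_one hγK₂ hγK).mul_left _) hterm
    _ = K₁ / (1 - γ * K₂) * dist s₁ s₂ := by
        rw [tsum_mul_left, tsum_geometric_of_lt_one hγK₂ hγK]
        field_simp
end

section
/- In a Markov decision process with bellman operators T^π V = r + γP^π V for policies π, if V* = T^{π*} V* is the optimal value, V^{πg} = T^{πg} V^{πg}, V is any value function, and πg is the greedy policy with respect to V (i.e., T^{πg} V = TV ≥ T^{π*} V pointwise), then pointwise V* - V^{πg} ≤ [(I - γP^{π*})⁻¹ + (I - γP^{πg})⁻¹] |TV - V|, where |·| is applied componentwise. -/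
/-!
Both halves of the bound come from one comparison principle for `A = 1 - γ • P`, `P` row
stochastic and `0 ≤ γ < 1`: `A *ᵥ u ≤ w` implies `u ≤ A⁻¹ *ᵥ w`. It follows from the discrete
minimum principle `0 ≤ A *ᵥ x → 0 ≤ x`: at a minimal coordinate `i`, `(P *ᵥ x) i ≥ x i`, so
`0 ≤ x i - γ (P *ᵥ x) i ≤ (1 - γ) x i`. The same principle makes `A` injective, hence invertible.

Greediness gives `(1 - γ Pstar)(Vstar - V) = r + γ Pstar V - V ≤ TV - V`, and the fixed-point
equation of `Vg` gives `(1 - γ Pg)(V - Vg) = V - TV`; both are at most `|TV - V|`, and adding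
the two comparisons yields the theorem.
-/

open Matrix

namespace Matrix

variable {n R : Type*} [Fintype n] [DecidableEq n]

theorem one_sub_smul_mulVec_apply [CommRing R] (P : Matrix n n R) (γ : R) (x : n → R) (i : n) :
    ((1 - γ • P) *ᵥ x) i = x i - γ * (P *ᵥ x) i := by
  simp only [sub_mulVec, one_mulVec, smul_mulVec, Pi.sub_apply, Pi.smul_apply, smul_eq_mul]

section

variable [Field R] [LinearOrder R] [IsStrictOrderedRing R] {P : Matrix n n R} {γ : R}

theorem nonneg_of_nonneg_one_sub_smul_mulVec (hP : P ∈ rowStochastic R n) (hγ0 : 0 ≤ γ)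
    (hγ1 : γ < 1) {x : n → R} (hx : 0 ≤ (1 - γ • P) *ᵥ x) : 0 ≤ x := by
  intro j
  have : Nonempty n := ⟨j⟩
  obtain ⟨i, hi⟩ := Finite.exists_min x
  have hPx : x i ≤ (P *ᵥ x) i :=
    calc x i = ∑ k, P i k * x i := by
          rw [← Finset.sum_mul, sum_row_of_mem_rowStochastic hP, one_mul]
      _ ≤ ∑ k, P i k * x k := Finset.sum_le_sum fun k _ =>
          mul_le_mul_of_nonneg_left (hi k) (nonneg_of_mem_rowStochastic hP)
  have hxi : 0 ≤ x i - γ * (P *ᵥ x) i := one_sub_smul_mulVec_apply P γ x i ▸ hx i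
  have : 0 ≤ (1 - γ) * x i := by nlinarith
  exact (nonneg_of_mul_nonneg_right this (sub_pos.2 hγ1)).trans (hi j)

theorem isUnit_one_sub_smul_of_mem_rowStochastic (hP : P ∈ rowStochastic R n) (hγ0 : 0 ≤ γ)
    (hγ1 : γ < 1) : IsUnit (1 - γ • P) := by
  refine mulVec_injective_iff_isUnit.1 fun x y hxy => le_antisymm ?_ ?_ <;>
    refine sub_nonneg.1 (nonneg_of_nonneg_one_sub_smul_mulVec hP hγ0 hγ1 ?_) <;>
    simp [mulVec_sub, hxy]

theorem le_inv_one_sub_smul_mulVec (hP : P ∈ rowStochastic R n) (hγ0 : 0 ≤ γ) (hγ1 : γ < 1)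
    {u w : n → R} (h : (1 - γ • P) *ᵥ u ≤ w) : u ≤ (1 - γ • P)⁻¹ *ᵥ w := by
  have hA := (isUnit_one_sub_smul_of_mem_rowStochastic hP hγ0 hγ1).map detMonoidHom
  refine sub_nonneg.1 (nonneg_of_nonneg_one_sub_smul_mulVec hP hγ0 hγ1 ?_)
  rwa [mulVec_sub, mulVec_mulVec, mul_nonsing_inv _ hA, one_mulVec, sub_nonneg]

end

end Matrix

/-- For a finite-state MDP with Bellman operators `T^π V = r + γ P^π V`,
if `V*` is the fixed point of `T^{π*}`, `V^{πg}` the fixed point of `T^{πg}` where `πg`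
is greedy w.r.t. `V` (so `TV = T^{πg} V ≥ T^{π*} V`), then componentwise
`V* - V^{πg} ≤ [(I - γP^{π*})⁻¹ + (I - γP^{πg})⁻¹] |TV - V|`. -/
theorem stmt7 {S : Type*} [Fintype S] [DecidableEq S]
    (γ : ℝ) (hγ : 0 ≤ γ) (hγ1 : γ < 1)
    (Pstar Pg : Matrix S S ℝ)
    (hPs_nonneg : ∀ i j, 0 ≤ Pstar i j) (hPs_row : ∀ i, ∑ j, Pstar i j = 1)
    (hPg_nonneg : ∀ i j, 0 ≤ Pg i j) (hPg_row : ∀ i, ∑ j, Pg i j = 1)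
    (r V Vstar Vg TV : S → ℝ)
    (hVstar : ∀ s, Vstar s = r s + γ * Pstar.mulVec Vstar s)
    (hVg : ∀ s, Vg s = r s + γ * Pg.mulVec Vg s)
    (hTV : ∀ s, TV s = r s + γ * Pg.mulVec V s)
    (hgreedy : ∀ s, r s + γ * Pstar.mulVec V s ≤ TV s) :
    ∀ s, Vstar s - Vg s
      ≤ ((1 - γ • Pstar)⁻¹ + (1 - γ • Pg)⁻¹).mulVec (fun s' => |TV s' - V s'|) s := by
  have hPs : Pstar ∈ rowStochastic ℝ S := mem_rowStochastic_iff_sum.2 ⟨hPs_nonneg, hPs_row⟩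
  have hPg : Pg ∈ rowStochastic ℝ S := mem_rowStochastic_iff_sum.2 ⟨hPg_nonneg, hPg_row⟩
  have hstar : Vstar - V ≤ (1 - γ • Pstar)⁻¹ *ᵥ fun s' => |TV s' - V s'| := by
    refine le_inv_one_sub_smul_mulVec hPs hγ hγ1 fun s => ?_
    rw [one_sub_smul_mulVec_apply, mulVec_sub]
    simp only [Pi.sub_apply]
    linarith [hVstar s, hgreedy s, le_abs_self (TV s - V s)]
  have hg : V - Vg ≤ (1 - γ • Pg)⁻¹ *ᵥ fun s' => |TV s' - V s'| := by
    refine le_inv_one_sub_smul_mulVec hPg hγ hγ1 fun s => ?_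
    rw [one_sub_smul_mulVec_apply, mulVec_sub]
    simp only [Pi.sub_apply]
    linarith [hVg s, hTV s, neg_abs_le (TV s - V s)]
  intro s
  rw [add_mulVec, Pi.add_apply]
  linarith [hstar s, hg s, Pi.sub_apply Vstar V s, Pi.sub_apply V Vg s]
end

section
/- Suppose V* - V^{πg} ≤ (2/(1-γ))·A·|TV - V| componentwise, where A is row-stochastic and satisfies v A ≤ C₁(v,u)·u componentwise for probability distributions v, u and constant C₁(v,u). Then for q ≥ 1, ‖V* - V^{πg}‖_{q,v} ≤ (2/(1-γ)) · C₁(v,u)^{1/q} · ‖TV - V‖_{q,u}, where ‖W‖_{q,ρ} = (Σ_s ρ(s)|W(s)|^q)^{1/q}. -/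
/-!
Raise the pointwise bound to the power `q` and apply Jensen's inequality to each (stochastic)
row of `A`, giving `|V* - V^{πg}|^q ≤ (2/(1-γ))^q · A |TV - V|^q`. Integrating against `v` turns
`A` into `vA ≤ C₁ u`, and taking `q`-th roots gives the claim.
-/

open Finset Matrix

theorem Matrix.mulVec_rpow_le_mulVec_rpow {m n : Type*} [Fintype n] {A : Matrix m n ℝ}
    (hA : ∀ i j, 0 ≤ A i j) (hrow : ∀ i, ∑ j, A i j = 1) {f : n → ℝ} (hf : ∀ j, 0 ≤ f j)
    {q : ℝ} (hq : 1 ≤ q) (i : m) :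
    (A *ᵥ f) i ^ q ≤ (A *ᵥ fun j => f j ^ q) i :=
  Real.rpow_arith_mean_le_arith_mean_rpow univ (A i) f (fun j _ => hA i j) (hrow i)
    (fun j _ => hf j) hq

theorem Matrix.dotProduct_mulVec_le_of_vecMul_le {m n : Type*} [Fintype m] [Fintype n]
    {A : Matrix m n ℝ} {v : m → ℝ} {u f : n → ℝ} {C : ℝ}
    (hvA : ∀ j, (v ᵥ* A) j ≤ C * u j) (hf : ∀ j, 0 ≤ f j) :
    v ⬝ᵥ (A *ᵥ f) ≤ C * (u ⬝ᵥ f) := by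
  rw [dotProduct_mulVec, dotProduct, dotProduct, mul_sum]
  refine sum_le_sum fun j _ => ?_
  rw [← mul_assoc]
  exact mul_le_mul_of_nonneg_right (hvA j) (hf j)

theorem Real.rpow_one_div_le_of_le_rpow_mul {x y c C q : ℝ} (hx : 0 ≤ x) (hy : 0 ≤ y)
    (hc : 0 ≤ c) (hC : 0 ≤ C) (hq : 0 < q) (h : x ≤ c ^ q * C * y) :
    x ^ (1 / q) ≤ c * C ^ (1 / q) * y ^ (1 / q) :=
  calc x ^ (1 / q) ≤ (c ^ q * C * y) ^ (1 / q) := by gcongr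
    _ = c * C ^ (1 / q) * y ^ (1 / q) := by
      rw [Real.mul_rpow (by positivity) hy, Real.mul_rpow (by positivity) hC,
        ← Real.rpow_mul hc, mul_one_div_cancel hq.ne', Real.rpow_one]

theorem stmt11_general {S : Type*} [Fintype S]
    (γ : ℝ) (hγ1 : γ < 1)
    (A : Matrix S S ℝ)
    (hA_nonneg : ∀ i j, 0 ≤ A i j) (hA_row : ∀ i, ∑ j, A i j = 1)
    (v u : S → ℝ)
    (hv_nonneg : ∀ s, 0 ≤ v s)
    (hu_nonneg : ∀ s, 0 ≤ u s)
    (C₁ : ℝ) (hC₁ : 0 ≤ C₁)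
    (hvA : ∀ s, ∑ s', v s' * A s' s ≤ C₁ * u s)
    (Vstar Vg TV V : S → ℝ)
    (hge : ∀ s, Vg s ≤ Vstar s)
    (hbound : ∀ s, Vstar s - Vg s
        ≤ (2 / (1 - γ)) * A.mulVec (fun s' => |TV s' - V s'|) s)
    (q : ℝ) (hq : 1 ≤ q) :
    (∑ s, v s * |Vstar s - Vg s| ^ q) ^ (1 / q)
      ≤ (2 / (1 - γ)) * C₁ ^ (1 / q) * (∑ s, u s * |TV s - V s| ^ q) ^ (1 / q) := by
  set c : ℝ := 2 / (1 - γ)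
  have hc : 0 ≤ c := div_nonneg zero_le_two (sub_nonneg.2 hγ1.le)
  set e : S → ℝ := fun s => |TV s - V s|
  have he : ∀ s, 0 ≤ e s := fun s => abs_nonneg _
  have hpointwise (s : S) : |Vstar s - Vg s| ^ q ≤ c ^ q * (A *ᵥ fun j => e j ^ q) s := by
    rw [abs_of_nonneg (sub_nonneg.2 (hge s))]
    calc (Vstar s - Vg s) ^ q ≤ (c * (A *ᵥ e) s) ^ q := by
          gcongr
          · exact sub_nonneg.2 (hge s)
          · exact hbound s
      _ = c ^ q * (A *ᵥ e) s ^ q :=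
          Real.mul_rpow hc (sum_nonneg fun j _ => mul_nonneg (hA_nonneg s j) (he j))
      _ ≤ c ^ q * (A *ᵥ fun j => e j ^ q) s := by
          gcongr
          exact mulVec_rpow_le_mulVec_rpow hA_nonneg hA_row he hq s
  have hsum : ∑ s, v s * |Vstar s - Vg s| ^ q ≤ c ^ q * C₁ * ∑ s, u s * e s ^ q :=
    calc ∑ s, v s * |Vstar s - Vg s| ^ q
        ≤ ∑ s, v s * (c ^ q * (A *ᵥ fun j => e j ^ q) s) := by
          gcongr with s
          exacts [hv_nonneg s, hpointwise s]
      _ = c ^ q * (v ⬝ᵥ (A *ᵥ fun j => e j ^ q)) := by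
          simp only [dotProduct, mul_sum, mul_left_comm]
      _ ≤ c ^ q * (C₁ * (u ⬝ᵥ fun j => e j ^ q)) := by
          gcongr
          exact dotProduct_mulVec_le_of_vecMul_le hvA fun j => Real.rpow_nonneg (he j) q
      _ = c ^ q * C₁ * ∑ s, u s * e s ^ q := by rw [mul_assoc]; rfl
  exact Real.rpow_one_div_le_of_le_rpow_mul
    (sum_nonneg fun s _ => mul_nonneg (hv_nonneg s) (Real.rpow_nonneg (abs_nonneg _) q))
    (sum_nonneg fun s _ => mul_nonneg (hu_nonneg s) (Real.rpow_nonneg (he s) q))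
    hc hC₁ (zero_lt_one.trans_le hq) hsum

/-- If `V* - V^{πg} ≤ (2/(1-γ)) A |TV - V|` componentwise with `A`
row-stochastic and `v A ≤ C₁(v,u) u`, then for `q ≥ 1`,
`‖V* - V^{πg}‖_{q,v} ≤ (2/(1-γ)) C₁^{1/q} ‖TV - V‖_{q,u}`. -/
theorem stmt11 {S : Type*} [Fintype S]
    (γ : ℝ) (hγ : 0 ≤ γ) (hγ1 : γ < 1)
    (A : Matrix S S ℝ)
    (hA_nonneg : ∀ i j, 0 ≤ A i j) (hA_row : ∀ i, ∑ j, A i j = 1)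
    (v u : S → ℝ)
    (hv_nonneg : ∀ s, 0 ≤ v s) (hv_sum : ∑ s, v s = 1)
    (hu_nonneg : ∀ s, 0 ≤ u s) (hu_sum : ∑ s, u s = 1)
    (C₁ : ℝ) (hC₁ : 0 ≤ C₁)
    (hvA : ∀ s, ∑ s', v s' * A s' s ≤ C₁ * u s)
    (Vstar Vg TV V : S → ℝ)
    (hge : ∀ s, Vg s ≤ Vstar s)
    (hbound : ∀ s, Vstar s - Vg s
        ≤ (2 / (1 - γ)) * A.mulVec (fun s' => |TV s' - V s'|) s)
    (q : ℝ) (hq : 1 ≤ q) :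
    (∑ s, v s * |Vstar s - Vg s| ^ q) ^ (1 / q)
      ≤ (2 / (1 - γ)) * C₁ ^ (1 / q) * (∑ s, u s * |TV s - V s| ^ q) ^ (1 / q) :=
  stmt11_general γ hγ1 A hA_nonneg hA_row v u hv_nonneg hu_nonneg C₁ hC₁ hvA Vstar Vg TV V hge
    hbound q hq
end

section
/- Composition of the swap lemma with the projection bound: under the assumptions that f permutes X₀ and fixes X \ X₀, that u₁* = u₀*∘f⁻¹ has Lip(u₁*) ≤ Lip(u₀*), and that minimizers u₀, u₁ of the empirical losses interpolate their data and satisfy Lip(u₀) = Lip(u₁), one has sup over minimizers u₁ of E_{x∼ρ_f}‖u₁* - u₁‖ ≤ sup over minimizers u₀ of E_{x∼ρ}‖u₀* - u₀‖, where each supremum bound equals (Lip(u_i*) + Lip(u_i))·E[dist(x, X₀)]. -/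
/-!
Both bounds come from one pointwise estimate: at a point `x` and any data point `y ∈ X₀`,
`‖u* x - u x‖ ≤ ‖u* x - u* y‖ + ‖u y - u x‖ ≤ (Lip u* + Lip u) · dist x y`, since `u` and `u*`
agree at `y`; taking the infimum over `y` and integrating gives `(Lip u* + Lip u) · E[dist(x, X₀)]`.
The two bounds share the factor `E[dist(x, X₀)]` because `f` only permutes `X₀`, so
`dist(f x, X₀) = dist(x, X₀)` and this expectation is the same under `ρ` and `ρ_f`.
-/

open MeasureTheory Metric

section Interpolation

variable {X Y : Type*} [PseudoMetricSpace X] [SeminormedAddCommGroup Y]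

theorem norm_sub_le_mul_infDist_of_eqOn {s : Set X} (hs : s.Nonempty) {v u : X → Y}
    {K L : NNReal} (hv : LipschitzWith K v) (hu : LipschitzWith L u) (hvu : Set.EqOn u v s)
    (x : X) : ‖v x - u x‖ ≤ ((K : ℝ) + L) * infDist x s := by
  have : Nonempty s := hs.to_subtype
  rw [infDist_eq_iInf, Real.mul_iInf_of_nonneg (by positivity)]
  refine le_ciInf fun ⟨y, hy⟩ => ?_
  calc ‖v x - u x‖ = ‖(v x - v y) + (u y - u x)‖ := by rw [hvu hy]; abel_nf
    _ ≤ ‖v x - v y‖ + ‖u y - u x‖ := norm_add_le _ _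
    _ ≤ K * dist x y + L * dist y x := by
        rw [← dist_eq_norm, ← dist_eq_norm]
        exact add_le_add (hv.dist_le_mul x y) (hu.dist_le_mul y x)
    _ = (K + L) * dist x y := by rw [dist_comm y x]; ring

theorem integral_norm_sub_le_mul_integral_infDist [MeasurableSpace X] (μ : Measure X)
    {s : Set X} (hs : s.Nonempty) (hint : Integrable (infDist · s) μ) {v u : X → Y}
    {K L : NNReal} (hv : LipschitzWith K v) (hu : LipschitzWith L u) (hvu : Set.EqOn u v s) :
    ∫ x, ‖v x - u x‖ ∂μ ≤ ((K : ℝ) + L) * ∫ x, infDist x s ∂μ := by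
  rw [← integral_const_mul]
  exact integral_mono_of_nonneg (.of_forall fun _ => norm_nonneg _) (hint.const_mul _)
    (.of_forall (norm_sub_le_mul_infDist_of_eqOn hs hv hu hvu))

end Interpolation

theorem Metric.infDist_apply_eq_of_image_eq_of_eqOn_compl {X : Type*} [PseudoMetricSpace X]
    {s : Set X} {f : X → X} (himg : f '' s = s) (hfix : Set.EqOn f id sᶜ) (x : X) :
    infDist (f x) s = infDist x s := by
  by_cases hx : x ∈ s
  · rw [infDist_zero_of_mem (himg ▸ Set.mem_image_of_mem f hx), infDist_zero_of_mem hx]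
  · rw [hfix hx, id]

section InvariantFunction

variable {X E : Type*} [MeasurableSpace X] [NormedAddCommGroup E] {μ : Measure X}
  {f : X → X} {g : X → E}

theorem integrable_map_iff_of_comp_eq (hf : AEMeasurable f μ)
    (hg : AEStronglyMeasurable g (μ.map f)) (hgf : g ∘ f = g) :
    Integrable g (μ.map f) ↔ Integrable g μ := by
  rw [integrable_map_measure hg hf, hgf]

theorem integral_map_of_comp_eq [NormedSpace ℝ E] (hf : AEMeasurable f μ)
    (hg : AEStronglyMeasurable g (μ.map f)) (hgf : g ∘ f = g) :
    ∫ x, g x ∂μ.map f = ∫ x, g x ∂μ := by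
  rw [integral_map hf hg]
  exact congrArg (fun h => ∫ x, h x ∂μ) hgf

end InvariantFunction

theorem stmt18_general {X Y : Type*} [MetricSpace X] [MeasurableSpace X] [BorelSpace X]
    [NormedAddCommGroup Y]
    (ρ : Measure X)
    (X₀ : Set X) (hne : X₀.Nonempty)
    (f : X ≃ X) (hmeas : Measurable f)
    (himg : f '' X₀ = X₀) (hfix : ∀ x ∉ X₀, f x = x)
    (u₀s u₁s : X → Y) (L₀s L₁s L : NNReal)
    (hu₀s : LipschitzWith L₀s u₀s)
    (hu₁s : LipschitzWith L₁s u₁s)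
    (hLipLe : L₁s ≤ L₀s)
    (hInt : Integrable (fun x => Metric.infDist x X₀) ρ) :
    (∀ u₁ : X → Y, LipschitzWith L u₁ → (∀ x ∈ X₀, u₁ x = u₁s x) →
        ∫ x, ‖u₁s x - u₁ x‖ ∂(ρ.map f)
          ≤ ((L₁s : ℝ) + (L : ℝ)) * ∫ x, Metric.infDist x X₀ ∂ρ)
    ∧ (∀ u₀ : X → Y, LipschitzWith L u₀ → (∀ x ∈ X₀, u₀ x = u₀s x) →
        ∫ x, ‖u₀s x - u₀ x‖ ∂ρ
          ≤ ((L₀s : ℝ) + (L : ℝ)) * ∫ x, Metric.infDist x X₀ ∂ρ)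
    ∧ ((L₁s : ℝ) + (L : ℝ)) * ∫ x, Metric.infDist x X₀ ∂ρ
        ≤ ((L₀s : ℝ) + (L : ℝ)) * ∫ x, Metric.infDist x X₀ ∂ρ := by
  have hinv : (infDist · X₀) ∘ f = (infDist · X₀) :=
    funext (infDist_apply_eq_of_image_eq_of_eqOn_compl himg fun x hx => hfix x hx)
  have hmeas_dist : AEStronglyMeasurable (infDist · X₀) (ρ.map f) :=
    (continuous_infDist_pt X₀).aestronglyMeasurable
  refine ⟨fun u₁ hu₁ hi => ?_, fun u₀ hu₀ hi =>
    integral_norm_sub_le_mul_integral_infDist ρ hne hInt hu₀s hu₀ hi,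
    mul_le_mul_of_nonneg_right (by gcongr) (integral_nonneg fun _ => infDist_nonneg)⟩
  rw [← integral_map_of_comp_eq hmeas.aemeasurable hmeas_dist hinv]
  exact integral_norm_sub_le_mul_integral_infDist _ hne
    ((integrable_map_iff_of_comp_eq hmeas.aemeasurable hmeas_dist hinv).2 hInt) hu₁s hu₁ hi

/-- combining the swap lemma with the projection bound. If `f` permutes
the finite set `X₀` and fixes its complement, `u₁* = u₀* ∘ f⁻¹` with
`Lip(u₁*) ≤ Lip(u₀*)`, and minimizers interpolate their data with `Lip(u₀) = Lip(u₁) = L`,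
then every minimizer `u₁` satisfies the tight bound
`E_{ρ_f}‖u₁* - u₁‖ ≤ (Lip(u₁*) + L)·E_ρ[dist(x,X₀)]`, every minimizer `u₀` satisfies
`E_ρ‖u₀* - u₀‖ ≤ (Lip(u₀*) + L)·E_ρ[dist(x,X₀)]`, and the former bound is smaller,
whence `sup E_{ρ_f}‖u₁* - u₁‖ ≤ sup E_ρ‖u₀* - u₀‖`. -/
theorem stmt18 {X Y : Type*} [MetricSpace X] [MeasurableSpace X] [BorelSpace X]
    [SecondCountableTopology X] [NormedAddCommGroup Y]
    (ρ : Measure X) [IsProbabilityMeasure ρ]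
    (X₀ : Set X) (hfin : X₀.Finite) (hne : X₀.Nonempty)
    (f : X ≃ X) (hmeas : Measurable f)
    (himg : f '' X₀ = X₀) (hfix : ∀ x ∉ X₀, f x = x)
    (u₀s u₁s : X → Y) (L₀s L₁s L : NNReal)
    (hu₀s : LipschitzWith L₀s u₀s)
    (hu₁s_def : u₁s = u₀s ∘ f.symm) (hu₁s : LipschitzWith L₁s u₁s)
    (hLipLe : L₁s ≤ L₀s)
    (hInt : Integrable (fun x => Metric.infDist x X₀) ρ) :
    (∀ u₁ : X → Y, LipschitzWith L u₁ → (∀ x ∈ X₀, u₁ x = u₁s x) →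
        ∫ x, ‖u₁s x - u₁ x‖ ∂(ρ.map f)
          ≤ ((L₁s : ℝ) + (L : ℝ)) * ∫ x, Metric.infDist x X₀ ∂ρ)
    ∧ (∀ u₀ : X → Y, LipschitzWith L u₀ → (∀ x ∈ X₀, u₀ x = u₀s x) →
        ∫ x, ‖u₀s x - u₀ x‖ ∂ρ
          ≤ ((L₀s : ℝ) + (L : ℝ)) * ∫ x, Metric.infDist x X₀ ∂ρ)
    ∧ ((L₁s : ℝ) + (L : ℝ)) * ∫ x, Metric.infDist x X₀ ∂ρ
        ≤ ((L₀s : ℝ) + (L : ℝ)) * ∫ x, Metric.infDist x X₀ ∂ρ :=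
  stmt18_general ρ X₀ hne f hmeas himg hfix u₀s u₁s L₀s L₁s L hu₀s hu₁s hLipLe hInt
end
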